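/- For any n×n Hermitian matrices A and Δ, and any function f : ℝ → ℝ that is Lipschitz with constant k, one has |∑_{i=1}^n f(λ_i(A + Δ)) − ∑_{i=1}^n f(λ_i(A))| ≤ k √n (Tr(Δ²))^{1/2}, where λ_1(M) ≥ … ≥ λ_n(M) denote the eigenvalues of a Hermitian matrix M listed in decreasing order. -/

import Mathlib

/-!
Let `U` and `V` be unitaries diagonalising `A + Δ` and `A`, with eigenvalues `μ` and `λ`. The
matrix `P i j = ‖(Uᴴ V) i j‖²` is doubly stochastic, so
`∑ f (μ i) - ∑ f (λ j) = ∑ P i j (f (μ i) - f (λ j))`, which is at most `k ∑ P i j |μ i - λ j|`.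
Since `(Uᴴ Δ V) i j = (μ i - λ j) (Uᴴ V) i j` and the Frobenius norm is unitarily invariant,
`∑ P i j (μ i - λ j)² = Tr Δ²`; Cauchy–Schwarz against the total mass `∑ P i j = n` finishes.
-/

open Finset Matrix
open scoped NNReal

lemma sq_sum_mul_abs_le_sum_mul_sum_mul_sq {ι : Type*} (s : Finset ι) {w d : ι → ℝ}
    (hw : ∀ i ∈ s, 0 ≤ w i) :
    (∑ i ∈ s, w i * |d i|) ^ 2 ≤ (∑ i ∈ s, w i) * ∑ i ∈ s, w i * d i ^ 2 :=
  sum_sq_le_sum_mul_sum_of_sq_le_mul s hw (fun i hi => mul_nonneg (hw i hi) (sq_nonneg _))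
    fun i _ => by rw [mul_pow, sq_abs, sq, mul_assoc]

section DoublyStochastic

variable {n : Type*} [Fintype n] [DecidableEq n]

lemma sum_sub_sum_eq_sum_sum_mul_sub_of_mem_doublyStochastic {R : Type*} [Ring R]
    [PartialOrder R] [IsOrderedRing R] {P : Matrix n n R} (hP : P ∈ doublyStochastic R n)
    (a b : n → R) : ∑ i, a i - ∑ j, b j = ∑ i, ∑ j, P i j * (a i - b j) := by
  simp only [mul_sub, sum_sub_distrib, ← sum_mul, sum_row_of_mem_doublyStochastic hP, one_mul]
  rw [sum_comm (f := fun i j => P i j * b j)]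
  simp only [← sum_mul, sum_col_of_mem_doublyStochastic hP, one_mul]

lemma sum_sum_mul_abs_le_of_mem_doublyStochastic {P : Matrix n n ℝ}
    (hP : P ∈ doublyStochastic ℝ n) (d : n → n → ℝ) :
    ∑ i, ∑ j, P i j * |d i j| ≤ √(Fintype.card n) * √(∑ i, ∑ j, P i j * d i j ^ 2) := by
  have rowCauchySchwarz (i : n) : (∑ j, P i j * |d i j|) ^ 2 ≤ ∑ j, P i j * d i j ^ 2 := by
    simpa [sum_row_of_mem_doublyStochastic hP] using
      sq_sum_mul_abs_le_sum_mul_sum_mul_sq univ (d := d i) fun j _ =>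
        nonneg_of_mem_doublyStochastic hP (i := i) (j := j)
  have cauchySchwarz : (∑ i, ∑ j, P i j * |d i j|) ^ 2 ≤
      Fintype.card n * ∑ i, ∑ j, P i j * d i j ^ 2 := by
    have := sq_sum_le_card_mul_sum_sq (s := univ) (f := fun i => ∑ j, P i j * |d i j|)
    rw [card_univ] at this
    exact this.trans <|
      mul_le_mul_of_nonneg_left (sum_le_sum fun i _ => rowCauchySchwarz i) (Nat.cast_nonneg _)
  rw [← Real.sqrt_mul (Nat.cast_nonneg _)]
  exact Real.le_sqrt_of_sq_le cauchySchwarz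

lemma LipschitzWith.abs_sum_sub_sum_le_of_mem_doublyStochastic {k : ℝ≥0} {f : ℝ → ℝ}
    (hf : LipschitzWith k f) {P : Matrix n n ℝ} (hP : P ∈ doublyStochastic ℝ n) (x y : n → ℝ) :
    |∑ i, f (x i) - ∑ j, f (y j)| ≤
      k * √(Fintype.card n) * √(∑ i, ∑ j, P i j * (x i - y j) ^ 2) := by
  have hP0 (i j : n) : 0 ≤ P i j := nonneg_of_mem_doublyStochastic hP
  calc |∑ i, f (x i) - ∑ j, f (y j)|
      = |∑ i, ∑ j, P i j * (f (x i) - f (y j))| := by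
        rw [sum_sub_sum_eq_sum_sum_mul_sub_of_mem_doublyStochastic hP]
    _ ≤ ∑ i, ∑ j, P i j * (k * |x i - y j|) := by
        refine (abs_sum_le_sum_abs _ _).trans <| sum_le_sum fun i _ =>
          (abs_sum_le_sum_abs _ _).trans <| sum_le_sum fun j _ => ?_
        rw [abs_mul, abs_of_nonneg (hP0 i j)]
        exact mul_le_mul_of_nonneg_left (hf.dist_le_mul (x i) (y j)) (hP0 i j)
    _ = k * ∑ i, ∑ j, P i j * |x i - y j| := by
        simp only [mul_sum, mul_left_comm (P _ _)]
    _ ≤ k * (√(Fintype.card n) * √(∑ i, ∑ j, P i j * (x i - y j) ^ 2)) :=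
        mul_le_mul_of_nonneg_left (sum_sum_mul_abs_le_of_mem_doublyStochastic hP _) k.2
    _ = k * √(Fintype.card n) * √(∑ i, ∑ j, P i j * (x i - y j) ^ 2) := (mul_assoc _ _ _).symm

end DoublyStochastic

namespace Matrix

variable {𝕜 n : Type*} [RCLike 𝕜] [Fintype n]

lemma re_mul_conjTranspose_apply_self (M : Matrix n n 𝕜) (i : n) :
    RCLike.re ((M * Mᴴ) i i) = ∑ j, ‖M i j‖ ^ 2 := by
  simp only [mul_apply, conjTranspose_apply, RCLike.star_def, RCLike.mul_conj, map_sum,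
    ← RCLike.ofReal_pow, RCLike.ofReal_re]

lemma re_conjTranspose_mul_apply_self (M : Matrix n n 𝕜) (j : n) :
    RCLike.re ((Mᴴ * M) j j) = ∑ i, ‖M i j‖ ^ 2 := by
  simp only [mul_apply, conjTranspose_apply, RCLike.star_def, RCLike.conj_mul, map_sum,
    ← RCLike.ofReal_pow, RCLike.ofReal_re]

lemma re_trace_mul_conjTranspose (M : Matrix n n 𝕜) :
    RCLike.re (M * Mᴴ).trace = ∑ i, ∑ j, ‖M i j‖ ^ 2 := by
  simp only [trace, diag, map_sum, re_mul_conjTranspose_apply_self]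

variable [DecidableEq n]

lemma of_norm_sq_mem_doublyStochastic {U : Matrix n n 𝕜} (hU : U ∈ unitaryGroup n 𝕜) :
    of (fun i j => ‖U i j‖ ^ 2) ∈ doublyStochastic ℝ n := by
  have hUUh : U * Uᴴ = 1 := Unitary.mul_star_self_of_mem hU
  have hUhU : Uᴴ * U = 1 := Unitary.star_mul_self_of_mem hU
  refine mem_doublyStochastic_iff_sum.2 ⟨fun i j => sq_nonneg _, fun i => ?_, fun j => ?_⟩
  · simpa [hUUh] using (re_mul_conjTranspose_apply_self U i).symm
  · simpa [hUhU] using (re_conjTranspose_mul_apply_self U j).symm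

lemma trace_conjTranspose_mul_mul_mul_conjTranspose {U V : Matrix n n 𝕜}
    (hU : U ∈ unitaryGroup n 𝕜) (hV : V ∈ unitaryGroup n 𝕜) (M : Matrix n n 𝕜) :
    (Uᴴ * M * V * (Uᴴ * M * V)ᴴ).trace = (M * Mᴴ).trace := by
  have hVVh : V * Vᴴ = 1 := Unitary.mul_star_self_of_mem hV
  have hUUh : U * Uᴴ = 1 := Unitary.mul_star_self_of_mem hU
  calc (Uᴴ * M * V * (Uᴴ * M * V)ᴴ).trace = (Uᴴ * (M * (V * Vᴴ) * Mᴴ * U)).trace := by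
        simp only [conjTranspose_mul, conjTranspose_conjTranspose, Matrix.mul_assoc]
    _ = (M * Mᴴ).trace := by
        rw [trace_mul_comm, hVVh, Matrix.mul_one, Matrix.mul_assoc, Matrix.mul_assoc, hUUh,
          Matrix.mul_one]

lemma conjTranspose_mul_sub_mul_apply {A B U V : Matrix n n 𝕜} {a b : n → 𝕜}
    (hA : A * V = V * diagonal a) (hB : Uᴴ * B = diagonal b * Uᴴ) (i j : n) :
    (Uᴴ * (B - A) * V) i j = (b i - a j) * (Uᴴ * V) i j := by
  rw [Matrix.mul_sub, Matrix.sub_mul, hB, Matrix.mul_assoc _ A, hA, Matrix.mul_assoc,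
    ← Matrix.mul_assoc _ _ (diagonal _)]
  simp only [sub_apply, diagonal_mul, mul_diagonal]
  ring

namespace IsHermitian

variable {A B : Matrix n n 𝕜}

lemma mul_eigenvectorUnitary (hA : A.IsHermitian) :
    A * (hA.eigenvectorUnitary : Matrix n n 𝕜) =
      (hA.eigenvectorUnitary : Matrix n n 𝕜) * diagonal (RCLike.ofReal ∘ hA.eigenvalues) := by
  rw [← hA.conjStarAlgAut_star_eigenvectorUnitary, Unitary.conjStarAlgAut_star_apply,
    ← Matrix.mul_assoc, ← Matrix.mul_assoc, Unitary.mul_star_self_of_mem (SetLike.coe_mem _),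
    Matrix.one_mul]

lemma conjTranspose_eigenvectorUnitary_mul (hA : A.IsHermitian) :
    (hA.eigenvectorUnitary : Matrix n n 𝕜)ᴴ * A =
      diagonal (RCLike.ofReal ∘ hA.eigenvalues) * (hA.eigenvectorUnitary : Matrix n n 𝕜)ᴴ := by
  rw [← hA.conjStarAlgAut_star_eigenvectorUnitary, Unitary.conjStarAlgAut_star_apply,
    Matrix.mul_assoc, ← star_eq_conjTranspose, Unitary.mul_star_self_of_mem (SetLike.coe_mem _),
    Matrix.mul_one]

lemma sum_sum_norm_sq_mul_sq_sub_eigenvalues (hA : A.IsHermitian) (hB : B.IsHermitian) :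
    ∑ i, ∑ j, ‖((hB.eigenvectorUnitary : Matrix n n 𝕜)ᴴ * hA.eigenvectorUnitary) i j‖ ^ 2 *
        (hB.eigenvalues i - hA.eigenvalues j) ^ 2 =
      RCLike.re ((B - A) * (B - A)ᴴ).trace := by
  rw [← trace_conjTranspose_mul_mul_mul_conjTranspose (SetLike.coe_mem hB.eigenvectorUnitary)
    (SetLike.coe_mem hA.eigenvectorUnitary), re_trace_mul_conjTranspose]
  simp only [conjTranspose_mul_sub_mul_apply hA.mul_eigenvectorUnitary
    hB.conjTranspose_eigenvectorUnitary_mul, Function.comp_apply, ← RCLike.ofReal_sub, norm_mul,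
    RCLike.norm_ofReal, mul_pow, sq_abs, mul_comm]

end IsHermitian

end Matrix

-- The sums are invariant under reordering, so Mathlib's `eigenvalues` (not sorted in general)
-- may stand in for the decreasing enumeration.
/-- For Hermitian matrices `A`, `Δ` and a `k`-Lipschitz function `f : ℝ → ℝ`,
`|∑ i f(λ_i(A+Δ)) - ∑ i f(λ_i(A))| ≤ k √n √(Tr Δ²)`.  (The sums over all
eigenvalues do not depend on the chosen ordering.) -/
theorem lipschitz_sum_eigenvalues_bound {n : ℕ} (A Δ : Matrix (Fin n) (Fin n) ℂ)
    (hA : A.IsHermitian) (hΔ : Δ.IsHermitian) (k : NNReal) (f : ℝ → ℝ)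
    (hf : LipschitzWith k f) :
    |(∑ i, f ((hA.add hΔ).eigenvalues i)) - ∑ i, f (hA.eigenvalues i)|
      ≤ (k : ℝ) * Real.sqrt n * Real.sqrt ((Δ * Δ).trace.re) := by
  have hB : (A + Δ).IsHermitian := hA.add hΔ
  have hW : (hB.eigenvectorUnitary : Matrix (Fin n) (Fin n) ℂ)ᴴ * hA.eigenvectorUnitary ∈
      unitaryGroup (Fin n) ℂ :=
    (star hB.eigenvectorUnitary * hA.eigenvectorUnitary).2
  have hP := of_norm_sq_mem_doublyStochastic hW
  calc _ ≤ k * √(Fintype.card (Fin n)) * √(∑ i, ∑ j, _) :=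
        hf.abs_sum_sub_sum_le_of_mem_doublyStochastic hP _ _
    _ = k * √n * √((Δ * Δ).trace.re) := by
        simp only [Fintype.card_fin, of_apply]
        rw [hA.sum_sum_norm_sq_mul_sq_sub_eigenvalues hB, add_sub_cancel_left, hΔ.eq]
        rfl
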